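/- For a fixed linear extension P of a finite poset S with n elements, the map 𝔔 ↦ (q_{P,Q(𝔔)}, Π(𝔔 − q_{P,Q(𝔔)})) is a bijection between the set of order-preserving maps S → ℤ≥0 ('reverse partitions on S') and the product of the set of P-pedestals {q_{P,Q} : Q linear extension of S} with the set of partitions having at most n parts; moreover the bijection is volume-additive: |𝔔| = |q_{P,Q(𝔔)}| + |Π(𝔔 − q_{P,Q(𝔔)})|. -/

import Mathlib

/-- `l` (0-indexed) is a `(P,Q)`-disagreement position: the `(l+1)`-st element
in `Q`-order precedes the `l`-th element in `P`-order. -/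
def disag {S : Type} {n : ℕ} (P Q : S ≃ Fin n) (l : ℕ) : Prop :=
  ∃ h : l + 1 < n, P (Q.symm ⟨l + 1, h⟩) < P (Q.symm ⟨l, Nat.lt_of_succ_lt h⟩)

open Classical in
/-- The `P`-pedestal of `Q`: `q_{P,Q}(α_k)` is the number of
`(P,Q)`-disagreement positions `l < k`, where `α_k` is the `k`-th element in
`Q`-order. -/
noncomputable def ped {S : Type} {n : ℕ} (P Q : S ≃ Fin n) (s : S) : ℕ :=
  ((Finset.range (Q s : ℕ)).filter fun l => disag P Q l).card

/-- `T` is a linear extension of the poset `S` (with `n` elements), encoded as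
a bijection `S ≃ Fin n` compatible with the partial order of `S`. -/
def IsLinExt {S : Type} [PartialOrder S] (n : ℕ) (T : S ≃ Fin n) : Prop :=
  ∀ a b : S, a ≤ b → T a ≤ T b

/-- `Q` is the linear order induced by the filling `f` with `P`-tie-breaking. -/
def Compat {S : Type} {n : ℕ} (P : S ≃ Fin n) (f : S → ℕ) (Q : S ≃ Fin n) : Prop :=
  ∀ a b : S, Q a < Q b ↔ (f a < f b ∨ (f a = f b ∧ P a < P b))

open Classical in
/-- The linear extension `Q(𝔔)` induced by `f = 𝔔` with `P`-tie-breaking. -/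
noncomputable def QOf {S : Type} {n : ℕ} (P : S ≃ Fin n) (f : S → ℕ) : S ≃ Fin n :=
  if h : ∃ Q : S ≃ Fin n, Compat P f Q then h.choose else P

/-- `b_St : 𝔔 ↦ (q_{P,Q(𝔔)}, Π(𝔔 − q_{P,Q(𝔔)}))`; the partition `Π(R)` with
at most `n` parts is recorded as the multiset of the `n` values of `R`. -/
noncomputable def bSt {S : Type} [Fintype S] {n : ℕ} (P : S ≃ Fin n) (f : S → ℕ) :
    (S → ℕ) × Multiset ℕ :=
  (ped P (QOf P f), Finset.univ.val.map fun a => f a - ped P (QOf P f) a)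

/-!
Along `Q`, the pedestal `q_{P,Q}` goes up by one exactly at the `(P,Q)`-disagreements, so `Q`
is the order that `q_{P,Q}` itself induces with `P`-tie-breaking, and `Q` is recovered from its
pedestal. If `Q = Q(𝔔)`, then `𝔔` must strictly increase at each disagreement, so `𝔔 - q_{P,Q}`
is nonnegative and weakly increasing along `Q`, hence determined by its multiset of values.
Conversely, adding to `q_{P,Q}` any filling that weakly increases along `Q` does not change the
induced order, which gives surjectivity.
-/

open Finset Function

theorem Fin.strictMono_of_lt_succ {α : Type*} [Preorder α] {n : ℕ} {g : Fin n → α}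
    (h : ∀ i j : Fin n, (j : ℕ) = i + 1 → g i < g j) : StrictMono g := by
  cases n with
  | zero => exact fun i => i.elim0
  | succ m => exact Fin.strictMono_iff_lt_succ.2 fun i => h _ _ rfl

theorem Fin.monotone_of_le_succ {α : Type*} [Preorder α] {n : ℕ} {g : Fin n → α}
    (h : ∀ i j : Fin n, (j : ℕ) = i + 1 → g i ≤ g j) : Monotone g := by
  cases n with
  | zero => exact fun i => i.elim0
  | succ m => exact Fin.monotone_iff_le_succ.2 fun i => h _ _ rfl

theorem Fin.eq_of_monotone_of_map_univ_eq {α : Type*} [LinearOrder α] {n : ℕ}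
    {D D' : Fin n → α} (hD : Monotone D) (hD' : Monotone D')
    (h : univ.val.map D = univ.val.map D') : D = D' := by
  rw [Fin.univ_val_map, Fin.univ_val_map, Multiset.coe_eq_coe] at h
  exact List.ofFn_injective <| h.eq_of_sortedLE (List.sortedLE_ofFn_iff.2 hD)
    (List.sortedLE_ofFn_iff.2 hD')

theorem Fin.exists_monotone_map_univ_eq {α : Type*} [LinearOrder α] {n : ℕ} (m : Multiset α)
    (hm : Multiset.card m = n) : ∃ μ : Fin n → α, Monotone μ ∧ univ.val.map μ = m := by
  have hL : (m.sort (· ≤ ·)).length = n := by rw [Multiset.length_sort, hm]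
  refine ⟨fun i => (m.sort (· ≤ ·)).get (Fin.cast hL.symm i), fun i j hij =>
    (Multiset.pairwise_sort m _).rel_get_of_le (by simpa using hij), ?_⟩
  rw [Fin.univ_val_map, ← List.ofFn_congr hL, List.ofFn_get, Multiset.sort_eq]

theorem Equiv.map_univ_val_eq_comp_symm {α β γ : Type*} [Fintype α] [Fintype β] (e : α ≃ β)
    (g : α → γ) : univ.val.map g = univ.val.map (g ∘ e.symm) := by
  rw [← Multiset.map_map, Multiset.map_univ_val_equiv]

variable {S : Type} {n : ℕ}

def lexKey (P : S ≃ Fin n) (f : S → ℕ) (a : S) : ℕ ×ₗ Fin n := toLex (f a, P a)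

section Compat

variable {P Q Q' : S ≃ Fin n} {f g : S → ℕ}

theorem lexKey_injective (P : S ≃ Fin n) (f : S → ℕ) : Injective (lexKey P f) :=
  fun _ _ h => P.injective (congrArg (·.2) h)

theorem compat_iff_strictMono : Compat P f Q ↔ StrictMono (lexKey P f ∘ Q.symm) := by
  refine ⟨fun h i j hij => ?_, fun h a b => ?_⟩
  · simpa [lexKey, Prod.Lex.toLex_lt_toLex] using (h (Q.symm i) (Q.symm j)).1 (by simpa using hij)
  · simpa [lexKey, Prod.Lex.toLex_lt_toLex] using (h.lt_iff_lt (a := Q a) (b := Q b)).symm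

theorem Compat.strictMono (h : Compat P f Q) : StrictMono (lexKey P f ∘ Q.symm) :=
  compat_iff_strictMono.1 h

theorem Compat.monotone (h : Compat P f Q) : Monotone (f ∘ Q.symm) := by
  intro i j hij
  have := h.strictMono.monotone hij
  simp only [comp_apply, lexKey, Prod.Lex.toLex_le_toLex] at this ⊢
  omega

theorem Compat.eq (h : Compat P f Q) (h' : Compat P f Q') : Q = Q' := by
  have hrange : Set.range (lexKey P f ∘ Q.symm) = Set.range (lexKey P f ∘ Q'.symm) := by
    simp only [Set.range_comp, Equiv.range_eq_univ]
  have := (h.strictMono.range_inj h'.strictMono).1 hrange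
  exact Equiv.symm_bijective.injective <| Equiv.ext <| congrFun <|
    (lexKey_injective P f).comp_left this

theorem exists_compat [Fintype S] (hn : Fintype.card S = n) (P : S ≃ Fin n) (f : S → ℕ) :
    ∃ Q : S ≃ Fin n, Compat P f Q := by
  classical
  let e := Fintype.orderIsoFinOfCardEq (Set.range (lexKey P f))
    ((Set.card_range_of_injective (lexKey_injective P f)).trans hn)
  refine ⟨(Equiv.ofInjective _ (lexKey_injective P f)).trans e.symm.toEquiv,
    compat_iff_strictMono.2 fun i j hij => ?_⟩
  simpa [Equiv.apply_ofInjective_symm] using e.strictMono hij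

theorem compat_qOf [Fintype S] (hn : Fintype.card S = n) (P : S ≃ Fin n) (f : S → ℕ) :
    Compat P f (QOf P f) := by
  have h := exists_compat hn P f
  rw [QOf, dif_pos h]
  exact h.choose_spec

theorem Compat.qOf_eq (h : Compat P f Q) : QOf P f = Q := by
  have h' : ∃ Q, Compat P f Q := ⟨Q, h⟩
  rw [QOf, dif_pos h']
  exact h'.choose_spec.eq h

theorem Compat.add (h : Compat P f Q) (hg : Monotone (g ∘ Q.symm)) : Compat P (f + g) Q := by
  refine compat_iff_strictMono.2 fun i j hij => ?_
  have hf := h.strictMono hij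
  have hg := hg hij.le
  simp only [comp_apply, lexKey, Prod.Lex.toLex_lt_toLex, Pi.add_apply] at hf hg ⊢
  omega

theorem Compat.isLinExt [PartialOrder S] (h : Compat P f Q) (hP : IsLinExt n P)
    (hf : Monotone f) : IsLinExt n Q := by
  intro a b hab
  rcases eq_or_ne a b with rfl | hne
  · exact le_rfl
  · refine ((h a b).2 ?_).le
    have hPab : P a < P b := (hP a b hab).lt_of_ne (P.injective.ne hne)
    exact (hf hab).lt_or_eq.imp_right (⟨·, hPab⟩)

end Compat

section Pedestal

variable (P Q : S ≃ Fin n) {f : S → ℕ}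

theorem disag_iff {i j : Fin n} (hij : (j : ℕ) = i + 1) :
    disag P Q i ↔ P (Q.symm j) < P (Q.symm i) := by
  obtain ⟨j, hj⟩ := j
  subst hij
  simp [disag, hj]

open Classical in
theorem ped_symm_of_val_eq_succ {i j : Fin n} (hij : (j : ℕ) = i + 1) :
    ped P Q (Q.symm j) = ped P Q (Q.symm i) + if disag P Q i then 1 else 0 := by
  simp only [ped, Equiv.apply_symm_apply, hij, range_add_one, filter_insert]
  split_ifs <;> simp [card_insert_of_notMem]

theorem compat_ped : Compat P (ped P Q) Q := by
  refine compat_iff_strictMono.2 <| Fin.strictMono_of_lt_succ fun i j hij => ?_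
  simp only [comp_apply, lexKey, Prod.Lex.toLex_lt_toLex, ped_symm_of_val_eq_succ P Q hij]
  by_cases hd : disag P Q i
  · simp [hd]
  · have hne : P (Q.symm i) ≠ P (Q.symm j) :=
      (P.injective.comp Q.symm.injective).ne (Fin.ne_of_val_ne (by omega))
    exact Or.inr ⟨by simp [hd], lt_of_le_of_ne (not_lt.1 ((disag_iff P Q hij).not.1 hd)) hne⟩

theorem qOf_ped : QOf P (ped P Q) = Q :=
  (compat_ped P Q).qOf_eq

variable {P Q}

theorem Compat.monotone_sub_ped (h : Compat P f Q) :
    Monotone fun i => (f (Q.symm i) : ℤ) - ped P Q (Q.symm i) := by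
  refine Fin.monotone_of_le_succ fun i j hij => ?_
  have hlt := h.strictMono (Fin.lt_def.2 (by omega) : i < j)
  simp only [comp_apply, lexKey, Prod.Lex.toLex_lt_toLex] at hlt
  rw [ped_symm_of_val_eq_succ P Q hij]
  split_ifs with hd
  · have := (disag_iff P Q hij).1 hd
    rcases hlt with hlt | ⟨_, hlt⟩
    · omega
    · exact absurd hlt this.not_gt
  · omega

theorem Compat.ped_le (h : Compat P f Q) (a : S) : ped P Q a ≤ f a := by
  have hpos : 0 < n := (Q a).pos
  have hfirst : ped P Q (Q.symm ⟨0, hpos⟩) = 0 := by simp [ped]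
  have := h.monotone_sub_ped (show (⟨0, hpos⟩ : Fin n) ≤ Q a from Nat.zero_le _)
  simp only [hfirst, Equiv.symm_apply_apply] at this
  omega

theorem Compat.monotone_tsub_ped (h : Compat P f Q) :
    Monotone fun i => f (Q.symm i) - ped P Q (Q.symm i) := by
  intro i j hij
  have hsub : (f (Q.symm i) : ℤ) - ped P Q (Q.symm i) ≤ f (Q.symm j) - ped P Q (Q.symm j) :=
    h.monotone_sub_ped hij
  have := h.ped_le (Q.symm i)
  have := h.ped_le (Q.symm j)
  dsimp only
  omega

end Pedestal

section Bijection

variable [Fintype S]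

theorem sum_eq_sum_bSt (hn : Fintype.card S = n) (P : S ≃ Fin n) (f : S → ℕ) :
    ∑ s, f s = ∑ s, (bSt P f).1 s + (bSt P f).2.sum := by
  rw [bSt, ← sum_eq_multiset_sum, ← sum_add_distrib]
  exact sum_congr rfl fun a _ => (add_tsub_cancel_of_le ((compat_qOf hn P f).ped_le a)).symm

theorem bSt_injective (hn : Fintype.card S = n) (P : S ≃ Fin n) : Injective (bSt P) := by
  intro f f' hff'
  obtain ⟨hped, hvals⟩ := Prod.ext_iff.1 hff'
  have hQ : QOf P f = QOf P f' := by
    rw [← qOf_ped P (QOf P f), ← qOf_ped P (QOf P f')]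
    exact congrArg (QOf P) hped
  have hc := compat_qOf hn P f
  have hc' := compat_qOf hn P f'
  rw [← hQ] at hc'
  simp only [bSt, ← hQ, (QOf P f).map_univ_val_eq_comp_symm] at hvals
  have hD := Fin.eq_of_monotone_of_map_univ_eq hc.monotone_tsub_ped hc'.monotone_tsub_ped hvals
  funext a
  have hval := congrFun hD (QOf P f a)
  simp only [Equiv.symm_apply_apply] at hval
  have := hc.ped_le a
  have := hc'.ped_le a
  omega

theorem surjOn_bSt [PartialOrder S] (P : S ≃ Fin n) :
    Set.SurjOn (bSt P) {f | Monotone f}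
      ({g | ∃ Q : S ≃ Fin n, IsLinExt n Q ∧ g = ped P Q} ×ˢ {m | Multiset.card m = n}) := by
  rintro ⟨_, m⟩ ⟨⟨Q, hQ, rfl⟩, hm⟩
  obtain ⟨μ, hμ, rfl⟩ := Fin.exists_monotone_map_univ_eq m hm
  have hc : Compat P (ped P Q + μ ∘ Q) Q := (compat_ped P Q).add (by simpa [comp_def] using hμ)
  refine ⟨ped P Q + μ ∘ Q, fun a b hab => by simpa using hc.monotone (hQ a b hab), ?_⟩
  simp [bSt, hc.qOf_eq, Q.map_univ_val_eq_comp_symm]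

theorem mapsTo_bSt [PartialOrder S] (hn : Fintype.card S = n) {P : S ≃ Fin n}
    (hP : IsLinExt n P) :
    Set.MapsTo (bSt P) {f | Monotone f}
      ({g | ∃ Q : S ≃ Fin n, IsLinExt n Q ∧ g = ped P Q} ×ˢ {m | Multiset.card m = n}) :=
  fun f hf => ⟨⟨QOf P f, (compat_qOf hn P f).isLinExt hP hf, rfl⟩, by simp [bSt, hn]⟩

end Bijection

/-- for a fixed linear extension `P` of a finite poset `S` with
`n` elements, `b_St` is a bijection between reverse partitions on `S`
(order-preserving maps `S → ℤ≥0`) and the product of the set of `P`-pedestals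
with the set of partitions with at most `n` parts; moreover the bijection is
volume-additive. -/
theorem stmt18 {S : Type} [PartialOrder S] [Fintype S] (n : ℕ)
    (hn : Fintype.card S = n) (P : S ≃ Fin n) (hP : IsLinExt n P) :
    Set.BijOn (bSt P) {f : S → ℕ | Monotone f}
      (({g : S → ℕ | ∃ Q : S ≃ Fin n, IsLinExt n Q ∧ g = ped P Q}) ×ˢ
        {m : Multiset ℕ | Multiset.card m = n}) ∧
    ∀ f : S → ℕ, Monotone f →
      ∑ s : S, f s = (∑ s : S, (bSt P f).1 s) + (bSt P f).2.sum :=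
  ⟨⟨mapsTo_bSt hn hP, (bSt_injective hn P).injOn, surjOn_bSt P⟩,
    fun f _ => sum_eq_sum_bSt hn P f⟩
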